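/- arXiv:1908.05025 — 4 statements merged into one kernel-verified Lean document; each statement's English description precedes it below -/
import Mathlib

section
/- For a ∈ (0,1) and ĉ > 0, the function f(z) = ((z - √(z² - 4(1-a)))/2)·(ĉ - z) is decreasing on the interval [2√(1-a), ĉ]. -/
/-! The first factor is the smaller root `g z` of `X² - z X + c` with `c = 4(1 - a)`; since
`g z · (z + √(z² - c)) = c` and `z + √(z² - c)` increases with `z`, `g` decreases. A product of
two nonnegative decreasing functions, `g / 2` and `ĉ - z`, decreases. -/

open Real Set

lemma AntitoneOn.mul {α M₀ : Type*} [Mul M₀] [Zero M₀] [Preorder M₀] [Preorder α]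
    [PosMulMono M₀] [MulPosMono M₀] {f g : α → M₀} {s : Set α} (hf : AntitoneOn f s)
    (hg : AntitoneOn g s) (hf₀ : ∀ x ∈ s, 0 ≤ f x) (hg₀ : ∀ x ∈ s, 0 ≤ g x) :
    AntitoneOn (f * g) s :=
  fun _ ha _ hb h ↦ mul_le_mul (hf ha hb h) (hg ha hb h) (hg₀ _ hb) (hf₀ _ ha)

namespace Real

variable {c z : ℝ}

lemma sub_sqrt_sq_sub_nonneg (hc : 0 ≤ c) (hz : 0 ≤ z) : 0 ≤ z - √(z ^ 2 - c) :=
  sub_nonneg.mpr <| calc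
    √(z ^ 2 - c) ≤ √(z ^ 2) := sqrt_le_sqrt (by linarith)
    _ = z := sqrt_sq hz

lemma sub_sqrt_sq_sub_eq_div (hz : √c ≤ z) (hc : 0 < c) :
    z - √(z ^ 2 - c) = c / (z + √(z ^ 2 - c)) := by
  have hz₀ : 0 < z := (sqrt_pos.mpr hc).trans_le hz
  have hcz : c ≤ z ^ 2 := (sqrt_le_left hz₀.le).mp hz
  have hden : 0 < z + √(z ^ 2 - c) := add_pos_of_pos_of_nonneg hz₀ (sqrt_nonneg _)
  rw [eq_div_iff hden.ne']
  linear_combination -sq_sqrt (sub_nonneg.mpr hcz)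

lemma antitoneOn_sub_sqrt_sq_sub (hc : 0 < c) :
    AntitoneOn (fun z ↦ z - √(z ^ 2 - c)) (Ici √c) := by
  intro x (hx : √c ≤ x) y (hy : √c ≤ y) hxy
  have hx₀ : 0 < x := (sqrt_pos.mpr hc).trans_le hx
  have hsqrt : √(x ^ 2 - c) ≤ √(y ^ 2 - c) := sqrt_le_sqrt (by nlinarith)
  simp only [sub_sqrt_sq_sub_eq_div hx hc, sub_sqrt_sq_sub_eq_div hy hc]
  exact div_le_div_of_nonneg_left hc.le (add_pos_of_pos_of_nonneg hx₀ (sqrt_nonneg _))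
    (by linarith)

end Real

theorem stmt_3_general (a chat : ℝ) (ha1 : a < 1) :
    AntitoneOn (fun z : ℝ => (z - Real.sqrt (z ^ 2 - 4 * (1 - a))) / 2 * (chat - z))
      (Set.Icc (2 * Real.sqrt (1 - a)) chat) := by
  have hc : 0 < 4 * (1 - a) := by linarith
  have hlow : 2 * √(1 - a) = √(4 * (1 - a)) := by
    rw [sqrt_mul (by norm_num), show (4 : ℝ) = 2 ^ 2 by norm_num, sqrt_sq zero_le_two]
  rw [hlow]
  have hsub : Icc √(4 * (1 - a)) chat ⊆ Ici √(4 * (1 - a)) := Icc_subset_Ici_self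
  refine AntitoneOn.mul (f := fun z ↦ (z - √(z ^ 2 - 4 * (1 - a))) / 2) (g := fun z ↦ chat - z)
    ?_ (fun x _ y _ hxy ↦ sub_le_sub_left hxy chat) ?_ (fun z hz ↦ sub_nonneg.mpr hz.2)
  · exact fun x hx y hy hxy ↦
      div_le_div_of_nonneg_right (antitoneOn_sub_sqrt_sq_sub hc (hsub hx) (hsub hy) hxy) zero_le_two
  · intro z hz
    exact div_nonneg (sub_sqrt_sq_sub_nonneg hc.le ((sqrt_nonneg _).trans hz.1)) zero_le_two

theorem stmt_3 (a chat : ℝ) (ha : 0 < a) (ha1 : a < 1) (hc : 2 * Real.sqrt (1 - a) < chat) :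
    AntitoneOn (fun z : ℝ => (z - Real.sqrt (z ^ 2 - 4 * (1 - a))) / 2 * (chat - z))
      (Set.Icc (2 * Real.sqrt (1 - a)) chat) :=
  stmt_3_general a chat ha1
end

section
/- Let c₁ > 0, a ∈ (0,1), t > 0, x ∈ ℝ with c₁ - 2√a ≤ x/t < c₁. Then the infimum over τ ∈ [0,t) of F(τ) = (x - c₁τ)²/(4(t-τ)) - (1-a)(t-τ) + τ(c₁²/4 - 1) equals (c₁/2 - √a)(x - c̄t), where c̄ = c₁/2 - √a + (1-a)/(c₁/2 - √a). -/
/-!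
Writing `a = r²` and `s = t - τ > 0`, completing the square in `s` gives
`F(τ) = m + (x - c₁t + 2rs)² / (4s)` with `m = (c₁/2 - r)x - (c₁/2 - r)²t - (1 - a)t`.
The square vanishes at `s = (c₁t - x)/(2r)`, which lies in `(0, t]` exactly when
`(c₁ - 2r)t ≤ x < c₁t`; so `m` is the least value of `F` on `[0, t)`.
-/

lemma sq_div_sub_add_eq_add_sq_div (c r t x τ : ℝ) (hτ : τ ≠ t) :
    (x - c * τ) ^ 2 / (4 * (t - τ)) - (1 - r ^ 2) * (t - τ) + τ * (c ^ 2 / 4 - 1)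
      = (c / 2 - r) * x - (c / 2 - r) ^ 2 * t - (1 - r ^ 2) * t
        + (x - c * t + 2 * r * (t - τ)) ^ 2 / (4 * (t - τ)) := by
  have : t - τ ≠ 0 := sub_ne_zero.mpr hτ.symm
  field_simp
  ring

lemma isLeast_image_Ico_of_sq_eq (a c r t x : ℝ) (hra : r ^ 2 = a) (hr : 0 < r)
    (hx1 : (c - 2 * r) * t ≤ x) (hx2 : x < c * t) :
    IsLeast ((fun τ : ℝ =>
        (x - c * τ) ^ 2 / (4 * (t - τ)) - (1 - a) * (t - τ) + τ * (c ^ 2 / 4 - 1))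
        '' Set.Ico 0 t)
      ((c / 2 - r) * x - (c / 2 - r) ^ 2 * t - (1 - a) * t) := by
  subst hra
  constructor
  · set s := (c * t - x) / (2 * r)
    have hs_pos : 0 < s := div_pos (by linarith) (by linarith)
    have hs_le : s ≤ t := by rw [div_le_iff₀ (by linarith)]; linarith
    refine ⟨t - s, ⟨by linarith, by linarith⟩, ?_⟩
    have hvanish : x - c * t + 2 * r * (t - (t - s)) = 0 := by
      simp only [s]; field_simp; ring
    simp only
    rw [sq_div_sub_add_eq_add_sq_div c r t x _ (by linarith), hvanish]
    simp
  · rintro _ ⟨τ, ⟨-, hτt⟩, rfl⟩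
    simp only
    rw [sq_div_sub_add_eq_add_sq_div c r t x τ hτt.ne]
    have : 0 ≤ (x - c * t + 2 * r * (t - τ)) ^ 2 / (4 * (t - τ)) :=
      div_nonneg (sq_nonneg _) (by linarith)
    linarith

theorem stmt_7_general (a c₁ t x : ℝ)
    (hc : 2 * Real.sqrt a < c₁)
    (hx1 : (c₁ - 2 * Real.sqrt a) * t ≤ x) (hx2 : x < c₁ * t) :
    IsGLB ((fun τ : ℝ =>
        (x - c₁ * τ) ^ 2 / (4 * (t - τ)) - (1 - a) * (t - τ) + τ * (c₁ ^ 2 / 4 - 1))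
        '' Set.Ico 0 t)
      ((c₁ / 2 - Real.sqrt a) *
        (x - (c₁ / 2 - Real.sqrt a + (1 - a) / (c₁ / 2 - Real.sqrt a)) * t)) := by
  have hr : 0 < Real.sqrt a :=
    (Real.sqrt_nonneg a).lt_of_ne' fun h => by rw [h] at hx1; linarith
  have hra : Real.sqrt a ^ 2 = a := Real.sq_sqrt (Real.sqrt_pos.mp hr).le
  have hcancel : (c₁ / 2 - Real.sqrt a) * ((1 - a) / (c₁ / 2 - Real.sqrt a)) = 1 - a :=
    mul_div_cancel₀ _ (by linarith)
  have hvalue : (c₁ / 2 - Real.sqrt a) *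
      (x - (c₁ / 2 - Real.sqrt a + (1 - a) / (c₁ / 2 - Real.sqrt a)) * t)
        = (c₁ / 2 - Real.sqrt a) * x - (c₁ / 2 - Real.sqrt a) ^ 2 * t - (1 - a) * t := by
    linear_combination -t * hcancel
  rw [hvalue]
  exact (isLeast_image_Ico_of_sq_eq a c₁ (Real.sqrt a) t x hra hr hx1 hx2).isGLB

theorem stmt_7 (a c₁ t x : ℝ) (ha : 0 < a) (ha1 : a < 1)
    (hc : 2 * Real.sqrt a < c₁) (ht : 0 < t)
    (hx1 : (c₁ - 2 * Real.sqrt a) * t ≤ x) (hx2 : x < c₁ * t) :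
    IsGLB ((fun τ : ℝ =>
        (x - c₁ * τ) ^ 2 / (4 * (t - τ)) - (1 - a) * (t - τ) + τ * (c₁ ^ 2 / 4 - 1))
        '' Set.Ico 0 t)
      ((c₁ / 2 - Real.sqrt a) *
        (x - (c₁ / 2 - Real.sqrt a + (1 - a) / (c₁ / 2 - Real.sqrt a)) * t)) :=
  stmt_7_general a c₁ t x hc hx1 hx2
end

section
/- Let c₁ > 0, a ∈ (0,1), t > 0, x ∈ ℝ with 0 ≤ x/t < c₁ - 2√a. Then the function F(τ) = (x - c₁τ)²/(4(t-τ)) - (1-a)(t-τ) + τ(c₁²/4 - 1) on [0,t) attains its infimum at τ = 0, with value (t/4)(x²/t² - 4(1-a)). -/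
/-!
Clearing denominators, `F τ - F 0 = τ ((c₁ t - x)² - 4 a t (t - τ)) / (4 t (t - τ))`.
The hypothesis `x < (c₁ - 2√a) t` gives `(c₁ t - x)² ≥ 4 a t² ≥ 4 a t (t - τ)`,
so the difference is nonnegative on `[0, t)`.
-/

open Set

noncomputable def F (a c₁ t x τ : ℝ) : ℝ :=
  (x - c₁ * τ) ^ 2 / (4 * (t - τ)) - (1 - a) * (t - τ) + τ * (c₁ ^ 2 / 4 - 1)

section

variable {a c₁ t x τ : ℝ}

theorem F_zero_eq (ht : t ≠ 0) : F a c₁ t x 0 = t / 4 * (x ^ 2 / t ^ 2 - 4 * (1 - a)) := by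
  unfold F
  field_simp
  ring

theorem F_sub_F_zero (ht : t ≠ 0) (hτ : t - τ ≠ 0) :
    F a c₁ t x τ - F a c₁ t x 0 =
      τ * ((x - c₁ * t) ^ 2 - 4 * a * t * (t - τ)) / (4 * t * (t - τ)) := by
  unfold F
  field_simp
  ring

theorem four_mul_mul_sq_le_sq_sub (ha : 0 ≤ a) (ht : 0 < t)
    (hx : x < (c₁ - 2 * Real.sqrt a) * t) : 4 * a * t ^ 2 ≤ (x - c₁ * t) ^ 2 := by
  have hgap : 2 * Real.sqrt a * t ≤ c₁ * t - x := by linarith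
  calc 4 * a * t ^ 2 = (2 * Real.sqrt a * t) ^ 2 := by
        rw [mul_pow, mul_pow, Real.sq_sqrt ha]; ring
    _ ≤ (c₁ * t - x) ^ 2 := pow_le_pow_left₀ (by positivity) hgap 2
    _ = (x - c₁ * t) ^ 2 := by ring

theorem F_zero_le (ha : 0 ≤ a) (ht : 0 < t) (hx : x < (c₁ - 2 * Real.sqrt a) * t)
    (hτ : τ ∈ Ico 0 t) : F a c₁ t x 0 ≤ F a c₁ t x τ := by
  obtain ⟨hτ0, hτt⟩ := hτ
  have hpos : 0 < t - τ := sub_pos.2 hτt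
  have hnum : 4 * a * t * (t - τ) ≤ (x - c₁ * t) ^ 2 :=
    calc 4 * a * t * (t - τ) ≤ 4 * a * t ^ 2 := by nlinarith [mul_nonneg ha ht.le]
      _ ≤ (x - c₁ * t) ^ 2 := four_mul_mul_sq_le_sq_sub ha ht hx
  rw [← sub_nonneg, F_sub_F_zero ht.ne' hpos.ne']
  exact div_nonneg (mul_nonneg hτ0 (sub_nonneg.2 hnum)) (by positivity)

end

theorem stmt_8_general (a c₁ t x : ℝ) (ha : 0 < a) (ht : 0 < t)
    (hx : x < (c₁ - 2 * Real.sqrt a) * t) :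
    (∀ τ ∈ Set.Ico (0 : ℝ) t,
        (x - c₁ * 0) ^ 2 / (4 * (t - 0)) - (1 - a) * (t - 0) + 0 * (c₁ ^ 2 / 4 - 1)
          ≤ (x - c₁ * τ) ^ 2 / (4 * (t - τ)) - (1 - a) * (t - τ) + τ * (c₁ ^ 2 / 4 - 1)) ∧
    (x - c₁ * 0) ^ 2 / (4 * (t - 0)) - (1 - a) * (t - 0) + 0 * (c₁ ^ 2 / 4 - 1)
      = t / 4 * (x ^ 2 / t ^ 2 - 4 * (1 - a)) :=
  ⟨fun _ hτ => F_zero_le ha.le ht hx hτ, F_zero_eq ht.ne'⟩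

theorem stmt_8 (a c₁ t x : ℝ) (ha : 0 < a) (ha1 : a < 1)
    (hc : 2 * Real.sqrt a < c₁) (ht : 0 < t)
    (hx0 : 0 ≤ x) (hx : x < (c₁ - 2 * Real.sqrt a) * t) :
    (∀ τ ∈ Set.Ico (0 : ℝ) t,
        (x - c₁ * 0) ^ 2 / (4 * (t - 0)) - (1 - a) * (t - 0) + 0 * (c₁ ^ 2 / 4 - 1)
          ≤ (x - c₁ * τ) ^ 2 / (4 * (t - τ)) - (1 - a) * (t - τ) + τ * (c₁ ^ 2 / 4 - 1)) ∧
    (x - c₁ * 0) ^ 2 / (4 * (t - 0)) - (1 - a) * (t - 0) + 0 * (c₁ ^ 2 / 4 - 1)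
      = t / 4 * (x ^ 2 / t ^ 2 - 4 * (1 - a)) :=
  stmt_8_general a c₁ t x ha ht hx
end

section
/- Let a ∈ (0,1), ĉ > 2√(1-a), and let c_LLW ∈ [2√(1-a), ĉ), λ_LLW = (c_LLW - √(c_LLW² - 4(1-a)))/2, and for μ ∈ (0, λ_LLW(ĉ - c_LLW)) define λ(μ) = (ĉ - √(ĉ² - 4(μ+1-a)))/2 and c(μ) = λ(μ) + (1-a)/λ(μ). Then c(μ) > c_LLW. -/
/-!
Both `λ_LLW` and `λ(μ)` are smaller roots of quadratics `x (c - x) = p`, and `x ↦ x (c - x)` is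
strictly increasing on `(-∞, c/2]`. Since `λ_LLW (c_LLW - λ_LLW) = 1 - a`, the bound on `μ` reads
`λ(μ) (ĉ - λ(μ)) < λ_LLW (ĉ - λ_LLW)`, so `λ(μ) < λ_LLW`. Monotonicity for the slope `c_LLW` then
gives `λ(μ) (c_LLW - λ(μ)) < 1 - a`, which is `c_LLW < λ(μ) + (1 - a) / λ(μ)`.
-/

open Set

noncomputable def smallRoot (c p : ℝ) : ℝ := (c - Real.sqrt (c ^ 2 - 4 * p)) / 2

lemma smallRoot_mul_sub {c p : ℝ} (h : 0 ≤ c ^ 2 - 4 * p) :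
    smallRoot c p * (c - smallRoot c p) = p := by
  unfold smallRoot
  nlinarith [Real.sq_sqrt h]

lemma smallRoot_le_half (c p : ℝ) : smallRoot c p ≤ c / 2 := by
  unfold smallRoot
  linarith [Real.sqrt_nonneg (c ^ 2 - 4 * p)]

lemma smallRoot_pos {c p : ℝ} (hc : 0 < c) (hp : 0 < p) : 0 < smallRoot c p := by
  have : Real.sqrt (c ^ 2 - 4 * p) < c := (Real.sqrt_lt' hc).2 (by linarith)
  unfold smallRoot
  linarith

lemma strictMonoOn_mul_sub (c : ℝ) : StrictMonoOn (fun x : ℝ => x * (c - x)) (Iic (c / 2)) := by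
  intro x hx y hy hxy
  rw [mem_Iic] at hx hy
  have : 0 < (y - x) * (c - x - y) := mul_pos (by linarith) (by linarith)
  linarith

lemma lt_add_div_of_mul_sub_lt {x c d : ℝ} (hx : 0 < x) (h : x * (c - x) < d) : c < x + d / x := by
  have : c - x < d / x := by rwa [lt_div_iff₀ hx, mul_comm]
  linarith

theorem stmt_14_general (a chat cLLW μ : ℝ) (ha1 : a < 1)
    (hcLLW : 2 * Real.sqrt (1 - a) ≤ cLLW) (hcc : cLLW < chat)
    (lamLLW : ℝ)
    (hlamLLW : lamLLW = (cLLW - Real.sqrt (cLLW ^ 2 - 4 * (1 - a))) / 2)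
    (hμ0 : 0 < μ) (hμ : μ < lamLLW * (chat - cLLW))
    (hdisc : 0 ≤ chat ^ 2 - 4 * (μ + 1 - a)) :
    cLLW < (chat - Real.sqrt (chat ^ 2 - 4 * (μ + 1 - a))) / 2
      + (1 - a) / ((chat - Real.sqrt (chat ^ 2 - 4 * (μ + 1 - a))) / 2) := by
  change cLLW < smallRoot chat (μ + 1 - a) + (1 - a) / smallRoot chat (μ + 1 - a)
  change lamLLW = smallRoot cLLW (1 - a) at hlamLLW
  subst hlamLLW
  set L := smallRoot cLLW (1 - a)
  set l := smallRoot chat (μ + 1 - a)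
  have hsqrt : 0 < Real.sqrt (1 - a) := Real.sqrt_pos.2 (by linarith)
  have hL : L * (cLLW - L) = 1 - a :=
    smallRoot_mul_sub (by nlinarith [Real.sq_sqrt (sub_pos.2 ha1).le])
  have hLc : L ≤ cLLW / 2 := smallRoot_le_half _ _
  have hlL : l < L := by
    refine (strictMonoOn_mul_sub chat).lt_iff_lt (smallRoot_le_half _ _)
      (show L ≤ chat / 2 by linarith) |>.1 ?_
    rw [smallRoot_mul_sub hdisc]
    linarith
  have hl : l * (cLLW - l) < 1 - a :=
    hL ▸ strictMonoOn_mul_sub cLLW (show l ≤ cLLW / 2 by linarith) hLc hlL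
  exact lt_add_div_of_mul_sub_lt (smallRoot_pos (by linarith) (by linarith)) hl

theorem stmt_14 (a chat cLLW μ : ℝ) (ha : 0 < a) (ha1 : a < 1)
    (hcLLW : 2 * Real.sqrt (1 - a) ≤ cLLW) (hcc : cLLW < chat)
    (lamLLW : ℝ)
    (hlamLLW : lamLLW = (cLLW - Real.sqrt (cLLW ^ 2 - 4 * (1 - a))) / 2)
    (hμ0 : 0 < μ) (hμ : μ < lamLLW * (chat - cLLW))
    (hdisc : 0 ≤ chat ^ 2 - 4 * (μ + 1 - a)) :
    cLLW < (chat - Real.sqrt (chat ^ 2 - 4 * (μ + 1 - a))) / 2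
      + (1 - a) / ((chat - Real.sqrt (chat ^ 2 - 4 * (μ + 1 - a))) / 2) :=
  stmt_14_general a chat cLLW μ ha1 hcLLW hcc lamLLW hlamLLW hμ0 hμ hdisc
end
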